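/- If δ ≠ 0 (with δ ∈ (0, π/2)), then the operator L is not Hermitian: there exist y, z ∈ D such that ⟨Ly, z⟩ ≠ ⟨y, Lz⟩. -/
import Mathlib


open ComplexConjugate

/-- The index set ℤ₀ = ℤ \ {0,1} as a subtype. -/
abbrev Z0 := {n : ℤ // n ≠ 0 ∧ n ≠ 1}

noncomputable def e2 (δ : ℝ) : ℂ := Complex.exp (2 * (δ : ℂ) * Complex.I)

/-- Extension of y : ℤ → ℂ by the auxiliary values y₁ = y_{−1} and
y₀ = (1 − e^{2iδ}) y_{−1} + e^{2iδ} y₂ coming from the impulse conditions. -/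
noncomputable def ext (δ : ℝ) (y : ℤ → ℂ) : ℤ → ℂ := fun n =>
  if n = 0 then (1 - e2 δ) * y (-1) + e2 δ * y 2
  else if n = 1 then y (-1)
  else y n

/-- (Ly)_n = −Δ²y_{n−1} + q_n y_n for n ∈ ℤ₀, using the auxiliary values. -/
noncomputable def Lop (δ : ℝ) (q : ℤ → ℝ) (y : ℤ → ℂ) (n : ℤ) : ℂ :=
  -(ext δ y (n + 1) - 2 * ext δ y n + ext δ y (n - 1)) + (q n : ℂ) * y n

/-- Membership in the domain D = { y ∈ l₀² : (qₙ yₙ) ∈ l₀² }. -/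
def MemD (q : ℤ → ℝ) (y : ℤ → ℂ) : Prop :=
  Summable (fun n : Z0 => ‖y (n : ℤ)‖ ^ 2) ∧
  Summable (fun n : Z0 => ‖(q (n : ℤ) : ℂ) * y (n : ℤ)‖ ^ 2)

lemma memD_single (q : ℤ → ℝ) (m : ℤ) (hm : m ≠ 0 ∧ m ≠ 1) :
    MemD q (fun n => if n = m then 1 else 0) := by
  constructor <;>
  · apply summable_of_ne_finset_zero (s := {(⟨m, hm⟩ : Z0)})
    intro b hb
    have hbm : (b : ℤ) ≠ m := by
      intro h
      have hb' : b = ⟨m, hm⟩ := Subtype.ext h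
      exact hb (by simp [hb'])
    simp [hbm]

/-- if δ ∈ (0, π/2), then L is not Hermitian: there are y, z ∈ D with
⟨Ly, z⟩ ≠ ⟨y, Lz⟩. -/
theorem L_not_hermitian (δ : ℝ) (hδ : 0 < δ ∧ δ < Real.pi / 2) (q : ℤ → ℝ) :
    ∃ y z : ℤ → ℂ, MemD q y ∧ MemD q z ∧
      (∑' n : Z0, Lop δ q y (n : ℤ) * conj (z (n : ℤ))) ≠
        ∑' n : Z0, y (n : ℤ) * conj (Lop δ q z (n : ℤ)) := by
  set y : ℤ → ℂ := fun n => if n = -1 then 1 else 0 with hy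
  set z : ℤ → ℂ := fun n => if n = 2 then 1 else 0 with hz
  refine ⟨y, z, memD_single q (-1) (by norm_num), memD_single q 2 (by norm_num), ?_⟩
  have h2 : ((⟨2, by norm_num⟩ : Z0) : ℤ) = 2 := rfl
  have hm1 : ((⟨-1, by norm_num⟩ : Z0) : ℤ) = -1 := rfl
  have hL : (∑' n : Z0, Lop δ q y (n : ℤ) * conj (z (n : ℤ))) = -1 := by
    rw [tsum_eq_single (⟨2, by norm_num⟩ : Z0)]
    · simp [Lop, ext, hy, hz, e2]
    · intro b hb
      have hbm : (b : ℤ) ≠ 2 := fun h => hb (Subtype.ext h)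
      simp [hz, hbm]
  have hR : (∑' n : Z0, y (n : ℤ) * conj (Lop δ q z (n : ℤ))) = -conj (e2 δ) := by
    rw [tsum_eq_single (⟨-1, by norm_num⟩ : Z0)]
    · simp [Lop, ext, hy, hz]
    · intro b hb
      have hbm : (b : ℤ) ≠ -1 := fun h => hb (Subtype.ext h)
      simp [hy, hbm]
  rw [hL, hR]
  intro h
  have he : e2 δ = 1 := by
    have : conj (e2 δ) = 1 := by
      have := neg_injective h
      rw [← this]
    rw [← Complex.conj_conj (e2 δ), this, map_one]
  have him : (e2 δ).im = Real.sin (2 * δ) := by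
    have : (2 : ℂ) * (δ : ℂ) * Complex.I = ((2 * δ : ℝ) : ℂ) * Complex.I := by push_cast; ring
    rw [e2, this, Complex.exp_ofReal_mul_I_im]
  have hsin : Real.sin (2 * δ) > 0 := by
    apply Real.sin_pos_of_pos_of_lt_pi <;> linarith [hδ.1, hδ.2, Real.pi_pos]
  rw [he] at him
  simp at him
  linarith
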